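/- Let S be a semigroup. The intersection ideal graph Γ(S) is disconnected if and only if S is the union of exactly two minimal left ideals, i.e., there exist distinct minimal left ideals I₁ and I₂ of S with S = I₁ ∪ I₂. -/

import Mathlib

/-- `I` is a left ideal of the semigroup `S`: a nonempty subset closed under
left multiplication by arbitrary elements of `S`. -/
def IsLeftIdeal (S : Type*) [Semigroup S] (I : Set S) : Prop :=
  I.Nonempty ∧ ∀ s : S, ∀ x ∈ I, s * x ∈ I

/-- `I` is a nontrivial left ideal of `S`: a left ideal with `I ≠ S`. -/
def IsNontrivialLeftIdeal (S : Type*) [Semigroup S] (I : Set S) : Prop :=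
  IsLeftIdeal S I ∧ I ≠ Set.univ

/-- `I` is a minimal left ideal of `S`: a nontrivial left ideal properly
containing no left ideal of `S`. -/
def IsMinimalLeftIdeal (S : Type*) [Semigroup S] (I : Set S) : Prop :=
  IsNontrivialLeftIdeal S I ∧ ∀ J : Set S, IsLeftIdeal S J → ¬ J ⊂ I

/-- `I` is a maximal left ideal of `S`: a nontrivial left ideal not properly
contained in any nontrivial left ideal of `S`. -/
def IsMaximalLeftIdeal (S : Type*) [Semigroup S] (I : Set S) : Prop :=
  IsNontrivialLeftIdeal S I ∧ ∀ J : Set S, IsNontrivialLeftIdeal S J → ¬ I ⊂ J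

/-- The intersection ideal graph `Γ(S)`: vertices are the nontrivial left ideals of `S`,
two distinct vertices being adjacent iff their intersection is nonempty. -/
def idealGraph (S : Type*) [Semigroup S] :
    SimpleGraph {I : Set S // IsNontrivialLeftIdeal S I} where
  Adj I J := I ≠ J ∧ (I.1 ∩ J.1).Nonempty
  symm := by
    constructor; rintro I J ⟨h1, h2⟩
    exact ⟨h1.symm, by rwa [Set.inter_comm]⟩
  loopless := by constructor; rintro I ⟨h1, -⟩; exact h1 rfl

/-! If two vertices of `Γ(S)` lie in different components, they are disjoint (else adjacent or
equal) and cover `S` (else their union would be a vertex meeting both), so each is the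
complement of the other. A left ideal properly inside one of them would meet it, hence also be
the complement of the other: so both are minimal. Conversely, two distinct minimal left ideals
covering `S` are disjoint, every nontrivial left ideal is one of them, and `Γ(S)` has no edges. -/

section

variable {S : Type*} [Semigroup S]

namespace IsLeftIdeal

lemma union {I J : Set S} (hI : IsLeftIdeal S I) (hJ : IsLeftIdeal S J) :
    IsLeftIdeal S (I ∪ J) :=
  ⟨hI.1.mono Set.subset_union_left, fun s x hx => hx.imp (hI.2 s x) (hJ.2 s x)⟩

lemma inter {I J : Set S} (hI : IsLeftIdeal S I) (hJ : IsLeftIdeal S J)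
    (h : (I ∩ J).Nonempty) : IsLeftIdeal S (I ∩ J) :=
  ⟨h, fun s x hx => ⟨hI.2 s x hx.1, hJ.2 s x hx.2⟩⟩

end IsLeftIdeal

namespace IsMinimalLeftIdeal

lemma subset_of_inter_nonempty {I K : Set S} (hI : IsMinimalLeftIdeal S I)
    (hK : IsLeftIdeal S K) (h : (K ∩ I).Nonempty) : I ⊆ K := by
  have hKI : K ∩ I = I := by
    by_contra hne
    exact hI.2 _ (hK.inter hI.1.1 h) (ssubset_of_subset_of_ne Set.inter_subset_right hne)
  exact hKI ▸ Set.inter_subset_left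

lemma disjoint {I J : Set S} (hI : IsMinimalLeftIdeal S I) (hJ : IsMinimalLeftIdeal S J)
    (hne : I ≠ J) : Disjoint I J := by
  by_contra h
  have hIJ := Set.not_disjoint_iff_nonempty_inter.mp h
  exact hne ((hI.subset_of_inter_nonempty hJ.1.1 (Set.inter_comm I J ▸ hIJ)).antisymm
    (hJ.subset_of_inter_nonempty hI.1.1 hIJ))

lemma eq_of_isCompl_of_inter_nonempty {I₁ I₂ K : Set S} (h₁ : IsMinimalLeftIdeal S I₁)
    (h₂ : IsMinimalLeftIdeal S I₂) (hc : IsCompl I₁ I₂) (hK : IsNontrivialLeftIdeal S K)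
    (hK₁ : (K ∩ I₁).Nonempty) : K = I₁ := by
  have h₁K : I₁ ⊆ K := h₁.subset_of_inter_nonempty hK.1 hK₁
  have hK₂ : Disjoint K I₂ := by
    by_contra hK₂
    have h₂K := h₂.subset_of_inter_nonempty hK.1 (Set.not_disjoint_iff_nonempty_inter.mp hK₂)
    exact hK.2 (top_unique (hc.sup_eq_top ▸ sup_le h₁K h₂K))
  rw [hc.eq_compl] at h₁K ⊢
  exact (Set.subset_compl_iff_disjoint_right.mpr hK₂).antisymm h₁K

lemma eq_or_eq_of_union_eq_univ {I₁ I₂ K : Set S} (h₁ : IsMinimalLeftIdeal S I₁)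
    (h₂ : IsMinimalLeftIdeal S I₂) (hne : I₁ ≠ I₂) (hun : I₁ ∪ I₂ = Set.univ)
    (hK : IsNontrivialLeftIdeal S K) : K = I₁ ∨ K = I₂ := by
  have hc : IsCompl I₁ I₂ := ⟨h₁.disjoint h₂ hne, codisjoint_iff.mpr hun⟩
  obtain ⟨x, hx⟩ := hK.1.1
  rcases (hun ▸ Set.mem_univ x : x ∈ I₁ ∪ I₂) with hx₁ | hx₂
  · exact .inl (eq_of_isCompl_of_inter_nonempty h₁ h₂ hc hK ⟨x, hx, hx₁⟩)
  · exact .inr (eq_of_isCompl_of_inter_nonempty h₂ h₁ hc.symm hK ⟨x, hx, hx₂⟩)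

end IsMinimalLeftIdeal

namespace idealGraph

lemma reachable_of_inter_nonempty {u v : {I : Set S // IsNontrivialLeftIdeal S I}}
    (h : (u.1 ∩ v.1).Nonempty) : (idealGraph S).Reachable u v := by
  rcases eq_or_ne u v with rfl | hne
  · rfl
  · exact SimpleGraph.Adj.reachable ⟨hne, h⟩

lemma isCompl_of_not_reachable {u v : {I : Set S // IsNontrivialLeftIdeal S I}}
    (h : ¬ (idealGraph S).Reachable u v) : IsCompl u.1 v.1 := by
  have hdisj : Disjoint u.1 v.1 := by
    by_contra h'
    exact h (reachable_of_inter_nonempty (Set.not_disjoint_iff_nonempty_inter.mp h'))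
  refine ⟨hdisj, codisjoint_iff.mpr ?_⟩
  by_contra hU
  -- otherwise `u ∪ v` is a vertex meeting both `u` and `v`
  let w : {I : Set S // IsNontrivialLeftIdeal S I} := ⟨u.1 ∪ v.1, u.2.1.union v.2.1, hU⟩
  obtain ⟨x, hx⟩ := u.2.1.1
  obtain ⟨y, hy⟩ := v.2.1.1
  exact h ((reachable_of_inter_nonempty (v := w) ⟨x, hx, .inl hx⟩).trans
    (reachable_of_inter_nonempty ⟨y, .inr hy, hy⟩))

lemma isMinimalLeftIdeal_of_not_reachable {u v : {I : Set S // IsNontrivialLeftIdeal S I}}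
    (h : ¬ (idealGraph S).Reachable u v) : IsMinimalLeftIdeal S u.1 := by
  refine ⟨u.2, fun K hK hKu => ?_⟩
  let k : {I : Set S // IsNontrivialLeftIdeal S I} :=
    ⟨K, hK, fun hKU => hKu.not_subset (hKU ▸ Set.subset_univ _)⟩
  obtain ⟨z, hz⟩ := hK.1
  have huk : (idealGraph S).Reachable u k := reachable_of_inter_nonempty ⟨z, hKu.1 hz, hz⟩
  -- both `u` and `k` are complements of `v`
  have hKu' : K = u.1 :=
    ((isCompl_of_not_reachable fun hkv => h (huk.trans hkv)).eq_compl).trans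
      (isCompl_of_not_reachable h).eq_compl.symm
  exact hKu.ne hKu'

lemma eq_bot_of_union_eq_univ {I₁ I₂ : Set S} (h₁ : IsMinimalLeftIdeal S I₁)
    (h₂ : IsMinimalLeftIdeal S I₂) (hne : I₁ ≠ I₂) (hun : I₁ ∪ I₂ = Set.univ) :
    idealGraph S = ⊥ := by
  ext a b
  simp only [SimpleGraph.bot_adj, iff_false]
  rintro ⟨hab, x, hxa, hxb⟩
  have hd := h₁.disjoint h₂ hne
  rcases h₁.eq_or_eq_of_union_eq_univ h₂ hne hun a.2 with ha | ha <;>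
    rcases h₁.eq_or_eq_of_union_eq_univ h₂ hne hun b.2 with hb | hb
  · exact hab (Subtype.ext (ha.trans hb.symm))
  · exact Set.disjoint_left.mp hd (ha ▸ hxa) (hb ▸ hxb)
  · exact Set.disjoint_left.mp hd (hb ▸ hxb) (ha ▸ hxa)
  · exact hab (Subtype.ext (ha.trans hb.symm))

end idealGraph

end

/-- `Γ(S)` is disconnected iff `S` is the union of exactly two minimal left ideals. -/
theorem idealGraph_disconnected_iff_union_two_minimal (S : Type*) [Semigroup S] :
    (Nonempty {I : Set S // IsNontrivialLeftIdeal S I} ∧ ¬ (idealGraph S).Connected) ↔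
      (∃ I₁ I₂ : Set S, IsMinimalLeftIdeal S I₁ ∧ IsMinimalLeftIdeal S I₂ ∧ I₁ ≠ I₂ ∧
        I₁ ∪ I₂ = Set.univ) := by
  constructor
  · rintro ⟨hV, hcon⟩
    obtain ⟨u, v, huv⟩ : ∃ u v, ¬ (idealGraph S).Reachable u v := by
      by_contra! h
      exact hcon ⟨h⟩
    have hc := idealGraph.isCompl_of_not_reachable huv
    refine ⟨u.1, v.1, idealGraph.isMinimalLeftIdeal_of_not_reachable huv,
      idealGraph.isMinimalLeftIdeal_of_not_reachable (huv ∘ .symm), fun heq => ?_,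
      codisjoint_iff.mp hc.codisjoint⟩
    exact u.2.1.1.ne_empty (disjoint_self.mp (heq ▸ hc.disjoint))
  · rintro ⟨I₁, I₂, h₁, h₂, hne, hun⟩
    refine ⟨⟨⟨I₁, h₁.1⟩⟩, fun hcon => hne ?_⟩
    have h := hcon.preconnected ⟨I₁, h₁.1⟩ ⟨I₂, h₂.1⟩
    rw [idealGraph.eq_bot_of_union_eq_univ h₁ h₂ hne hun, SimpleGraph.reachable_bot] at h
    exact congrArg Subtype.val h
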